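/- Let F be a field, V an infinite-dimensional F-vector space, V* its dual, V̄ = V ⊕ V*, and q the quadratic form on V̄ given by q(a,α) = α(a). Then there exists a generator W of the quadric S_q (a maximal totally q-singular subspace of V̄) with W ∩ (V ⊕ 0) = 0 and W + (V ⊕ 0) a proper subspace of V̄; that is, S_q admits a generator opposite to the generator V ⊕ 0 which is not a complement of it. (Concretely, for a basis (e_i)_{i∈I} of V and functionals η_i ∈ V* satisfying η_i(e_i) = 0 and η_i(e_j) + η_j(e_i) = 0 for all i, j — obtained from a partition of the infinite index set I into pairs — the subspace W = span{(e_i, η_i) : i ∈ I} works.) -/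

import Mathlib

/-- The quadratic form `q(a,α) = α(a)` on `V̄ = V ⊕ V*`. -/
def quadForm {F V : Type*} [Field F] [AddCommGroup V] [Module F V]
    (p : V × Module.Dual F V) : F :=
  p.2 p.1

/-- A totally `q`-singular subspace of `V̄`. -/
def QTotSing {F V : Type*} [Field F] [AddCommGroup V] [Module F V]
    (W : Submodule F (V × Module.Dual F V)) : Prop :=
  ∀ w ∈ W, quadForm w = 0

/-- A generator of the quadric `S_q`: a maximal totally `q`-singular subspace. -/
def QGen {F V : Type*} [Field F] [AddCommGroup V] [Module F V]
    (W : Submodule F (V × Module.Dual F V)) : Prop :=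
  QTotSing W ∧
    ∀ W' : Submodule F (V × Module.Dual F V), QTotSing W' → W ≤ W' → W' = W

/-!
The graph of a linear map `N : V → V*` meets `V ⊕ 0` trivially iff `N` is injective, and its
sum with `V ⊕ 0` is `V̄` iff `N` is surjective. Polarizing `q` shows that the graph
is a generator as soon as `N` is alternating (`N x x = 0`). In infinite dimension a basis can be
indexed by `ι ⊕ ι`, i.e. split into pairs `(e_i, f_i)`, and the standard symplectic form
`ω(e_i, f_j) = δ_ij = -ω(f_j, e_i)` is alternating and injective; but every `ω x` vanishes on
almost all basis vectors, so the functional that is `1` on every `f_i` is not in its image.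
-/

open Function

namespace LinearMap

variable {R M M₂ : Type*} [Ring R] [AddCommGroup M] [AddCommGroup M₂] [Module R M] [Module R M₂]

theorem graph_inf_prod_top_bot_eq_bot_iff (f : M →ₗ[R] M₂) :
    f.graph ⊓ (⊤ : Submodule R M).prod ⊥ = ⊥ ↔ Injective f := by
  rw [← ker_eq_bot, Submodule.eq_bot_iff, Submodule.eq_bot_iff]
  simp +contextual [Prod.ext_iff]

theorem graph_sup_prod_top_bot_eq_top_iff (f : M →ₗ[R] M₂) :
    f.graph ⊔ (⊤ : Submodule R M).prod ⊥ = ⊤ ↔ Surjective f := by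
  refine ⟨fun h y => ?_, fun hf => eq_top_iff.2 fun p _ => ?_⟩
  · obtain ⟨u, hu, v, hv, huv⟩ := Submodule.mem_sup.1 (h ▸ Submodule.mem_top : ((0 : M), y) ∈ _)
    refine ⟨u.1, ?_⟩
    simp only [mem_graph_iff, Submodule.mem_prod, Submodule.mem_bot] at hu hv
    rw [← hu]
    simpa [hv.2] using congrArg Prod.snd huv
  · obtain ⟨x, hx⟩ := hf p.2
    refine Submodule.mem_sup.2 ⟨(x, f x), rfl, (p.1 - x, 0), by simp, ?_⟩
    ext <;> simp [hx]

end LinearMap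

section Generator

variable {F V : Type*} [Field F] [AddCommGroup V] [Module F V]

theorem quadForm_add (v w : V × Module.Dual F V) :
    quadForm (v + w) = quadForm v + quadForm w + (v.2 w.1 + w.2 v.1) := by
  simp only [quadForm, Prod.fst_add, Prod.snd_add, map_add, LinearMap.add_apply]
  ring

theorem qTotSing_graph {N : V →ₗ[F] Module.Dual F V} (hN : N.IsAlt) : QTotSing N.graph := by
  intro w hw
  rw [quadForm, hw]
  exact hN w.1

theorem qGen_graph {N : V →ₗ[F] Module.Dual F V} (hN : N.IsAlt) : QGen N.graph := by
  refine ⟨qTotSing_graph hN, fun W hW hle => le_antisymm (fun w hw => ?_) hle⟩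
  -- polarizing `q` on `w + (v, N v) ∈ W` gives `w.2 v = - N v w.1 = N w.1 v`
  refine LinearMap.ext fun v => ?_
  have hv : (v, N v) ∈ W := hle rfl
  have hsum := hW _ (W.add_mem hw hv)
  rw [quadForm_add, hW w hw, hW _ hv, zero_add, zero_add, add_eq_zero_iff_eq_neg] at hsum
  rw [hsum, hN.neg]

end Generator

namespace Module.Basis

variable {R M ι : Type*} [CommRing R] [AddCommGroup M] [Module R M] (b : Basis (ι ⊕ ι) R M)

/-- `⟨e_i, f_j⟩ = δ_ij` and `⟨f_i, ·⟩ = 0`, where `e_i = b (inl i)` and `f_i = b (inr i)`. -/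
noncomputable def pairingInlInr : M →ₗ[R] Module.Dual R M :=
  b.constr R (Sum.elim (fun i => b.coord (.inr i)) 0)

noncomputable def symplecticForm : M →ₗ[R] Module.Dual R M :=
  b.pairingInlInr - b.pairingInlInr.flip

theorem symplecticForm_isAlt : b.symplecticForm.IsAlt := fun x => by
  simp [symplecticForm]

theorem symplecticForm_apply_basis (x : M) (k : ι ⊕ ι) :
    b.symplecticForm x (b k) = b.pairingInlInr.flip (b k) x - b.pairingInlInr (b k) x :=
  rfl

theorem symplecticForm_apply_inl (x : M) (i : ι) :
    b.symplecticForm x (b (.inl i)) = -b.repr x (.inr i) := by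
  have : b.pairingInlInr.flip (b (.inl i)) = 0 := b.ext fun k => by
    cases k <;> simp [pairingInlInr]
  rw [symplecticForm_apply_basis, this]
  simp [pairingInlInr]

theorem symplecticForm_apply_inr (x : M) (i : ι) :
    b.symplecticForm x (b (.inr i)) = b.repr x (.inl i) := by
  have : b.pairingInlInr.flip (b (.inr i)) = b.coord (.inl i) := b.ext fun k => by
    classical
    cases k <;> simp [pairingInlInr, Finsupp.single_apply, eq_comm]
  rw [symplecticForm_apply_basis, this]
  simp [pairingInlInr]

theorem symplecticForm_injective : Function.Injective b.symplecticForm := by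
  refine (injective_iff_map_eq_zero _).2 fun x hx => b.forall_coord_eq_zero_iff.1 fun k => ?_
  cases k with
  | inl i => simpa [hx] using (b.symplecticForm_apply_inr x i).symm
  | inr i => simpa [hx] using (b.symplecticForm_apply_inl x i).symm

theorem symplecticForm_not_surjective [Nontrivial R] [Infinite ι] : ¬ Function.Surjective b.symplecticForm := by
  intro hsurj
  obtain ⟨x, hx⟩ := hsurj (b.constr R fun _ => 1)
  -- `x` would have the nonzero coordinate `1` at every `inl i`
  refine Set.infinite_of_injective_forall_mem Sum.inl_injective (fun i => ?_)
    (b.repr x).support.finite_toSet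
  simp [← b.symplecticForm_apply_inr, hx]

end Module.Basis

theorem exists_isAlt_injective_not_surjective {F V : Type*} [Field F] [AddCommGroup V]
    [Module F V] (hV : ¬ Module.Finite F V) :
    ∃ N : V →ₗ[F] Module.Dual F V, N.IsAlt ∧ Injective N ∧ ¬ Surjective N := by
  let ι := Module.Free.ChooseBasisIndex F V
  let b : Module.Basis ι F V := Module.Free.chooseBasis F V
  have : Infinite ι := not_finite_iff_infinite.1 fun _ => hV (.of_basis b)
  obtain ⟨e⟩ : Nonempty (ι ⊕ ι ≃ ι) := by
    rw [← Cardinal.eq, Cardinal.mk_sum, Cardinal.lift_id,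
      Cardinal.add_eq_self (Cardinal.aleph0_le_mk _)]
  let b' := b.reindex e.symm
  exact ⟨b'.symplecticForm, b'.symplecticForm_isAlt, b'.symplecticForm_injective,
    b'.symplecticForm_not_surjective⟩

/-- The quadric `S_q` admits a generator which is opposite to, but not a
complement of, the generator `V ⊕ 0`. -/
theorem stmt_16 {F V : Type*} [Field F] [AddCommGroup V] [Module F V]
    (hV : ¬ Module.Finite F V) :
    ∃ W : Submodule F (V × Module.Dual F V), QGen W ∧
      W ⊓ (⊤ : Submodule F V).prod (⊥ : Submodule F (Module.Dual F V)) = ⊥ ∧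
      W ⊔ (⊤ : Submodule F V).prod (⊥ : Submodule F (Module.Dual F V)) ≠ ⊤ := by
  obtain ⟨N, hN, hinj, hsurj⟩ := exists_isAlt_injective_not_surjective hV
  exact ⟨N.graph, qGen_graph hN, N.graph_inf_prod_top_bot_eq_bot_iff.2 hinj,
    mt N.graph_sup_prod_top_bot_eq_top_iff.1 hsurj⟩
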